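/- arXiv:1907.09522 — 2 statements merged into one kernel-verified Lean document; each statement's English description precedes it below -/
import Mathlib

section
/- Let Q1 ∈ ℝ^{p×k1} and B1 ∈ ℝ^{p×(p−k1)} be such that the p×p matrix (Q1, B1) is orthogonal, let Q2 ∈ ℝ^{p×k2} satisfy Q2ᵀQ2 = I_{k2}, and suppose D(Q1,Q2) ≥ d for some d ≥ 0. Let A2 ∈ ℝ^{p×k2} have the same column space as Q2 and satisfy ‖A2 v‖₂ ≥ a2 · p^{(1−δ2)/2} · ‖v‖₂ for all v ∈ ℝ^{k2}, where a2 > 0 and δ2 ∈ [0,1]. Then ‖B1ᵀ A2‖₂² ≥ a2² d² τ p^{1−δ2}, where τ = min(k1/k2, k2/k1). -/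
/-!
Because `(Q1, B1)` is orthogonal, `Q1 Q1ᵀ + B1 B1ᵀ = 1`, so every column `q` of `Q2` splits as
`‖Q1ᵀ q‖² + ‖B1ᵀ q‖² = 1`, while `tr (Q1 Q1ᵀ Q2 Q2ᵀ) = ∑ᵢ ‖Q1ᵀ qᵢ‖²`. The distance bound caps this
trace by `(1 - d²) min(k1, k2)`, so some column has `‖B1ᵀ qᵢ‖² ≥ d² τ`. Writing `qᵢ = A2 v`, the
lower bound on `A2` gives `a2 p^{(1-δ2)/2} ‖v‖ ≤ ‖qᵢ‖ = 1`, whereas `‖B1ᵀ qᵢ‖ ≤ ‖B1ᵀ A2‖₂ ‖v‖`.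
-/

open Matrix

/-- Spectral norm (largest singular value) of a real matrix, defined as the operator
norm of the induced linear map between Euclidean spaces. -/
noncomputable def spec {m n : ℕ} (A : Matrix (Fin m) (Fin n) ℝ) : ℝ :=
  ‖LinearMap.toContinuousLinearMap (Matrix.toEuclideanLin A)‖

/-- Euclidean norm of a vector. -/
noncomputable def vnorm {n : ℕ} (v : Fin n → ℝ) : ℝ :=
  Real.sqrt (∑ i, v i ^ 2)

lemma vnorm_nonneg {n : ℕ} (v : Fin n → ℝ) : 0 ≤ vnorm v := Real.sqrt_nonneg _

lemma vnorm_sq {n : ℕ} (v : Fin n → ℝ) : vnorm v ^ 2 = v ⬝ᵥ v := by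
  rw [vnorm, Real.sq_sqrt (Finset.sum_nonneg fun _ _ => sq_nonneg _)]
  simp only [dotProduct, sq]

lemma vnorm_eq_norm {n : ℕ} (v : Fin n → ℝ) : vnorm v = ‖WithLp.toLp 2 v‖ := by
  simp [EuclideanSpace.norm_eq, vnorm, sq_abs]

lemma vnorm_mulVec_le_spec {m n : ℕ} (A : Matrix (Fin m) (Fin n) ℝ) (v : Fin n → ℝ) :
    vnorm (A *ᵥ v) ≤ spec A * vnorm v := by
  simpa [vnorm_eq_norm, spec, toLpLin_toLp] using
    (LinearMap.toContinuousLinearMap (toEuclideanLin A)).le_opNorm (WithLp.toLp 2 v)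

lemma mul_vnorm_mulVec_mulVec_le_spec {m n k : ℕ} (B : Matrix (Fin m) (Fin n) ℝ)
    (A : Matrix (Fin n) (Fin k) ℝ) {c : ℝ} (hc : 0 ≤ c) {v : Fin k → ℝ}
    (hv : c * vnorm v ≤ vnorm (A *ᵥ v)) :
    c * vnorm (B *ᵥ A *ᵥ v) ≤ spec (B * A) * vnorm (A *ᵥ v) :=
  calc c * vnorm (B *ᵥ A *ᵥ v) ≤ c * (spec (B * A) * vnorm v) := by
        rw [mulVec_mulVec]; exact mul_le_mul_of_nonneg_left (vnorm_mulVec_le_spec _ _) hc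
    _ = spec (B * A) * (c * vnorm v) := by ring
    _ ≤ spec (B * A) * vnorm (A *ᵥ v) := mul_le_mul_of_nonneg_left hv (norm_nonneg _)

lemma vnorm_transpose_mulVec_sq {m n : ℕ} (M : Matrix (Fin m) (Fin n) ℝ) (x : Fin m → ℝ) :
    vnorm (Mᵀ *ᵥ x) ^ 2 = x ⬝ᵥ (M * Mᵀ) *ᵥ x := by
  have h : x ᵥ* M = Mᵀ *ᵥ x := by simpa using vecMul_transpose Mᵀ x
  rw [vnorm_sq, ← mulVec_mulVec, dotProduct_mulVec x M, h]

lemma vnorm_col_eq_one {m n : ℕ} {N : Matrix (Fin m) (Fin n) ℝ} (hN : Nᵀ * N = 1) (i : Fin n) :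
    vnorm (N.col i) = 1 := by
  have h : vnorm (N.col i) ^ 2 = 1 := by
    rw [vnorm_sq, ← one_apply_eq (α := ℝ) i, ← hN]; rfl
  nlinarith [vnorm_nonneg (N.col i)]

lemma mul_transpose_add_mul_transpose_eq_one {R l m n : Type*} [CommRing R] [Fintype l]
    [Fintype m] [Fintype n] [DecidableEq l] [DecidableEq m] [DecidableEq n] (e : l ≃ m ⊕ n)
    {Q : Matrix l m R} {B : Matrix l n R} (hQ : Qᵀ * Q = 1) (hB : Bᵀ * B = 1)
    (hQB : Qᵀ * B = 0) : Q * Qᵀ + B * Bᵀ = 1 := by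
  have hBQ : Bᵀ * Q = 0 := by simpa using congrArg transpose hQB
  rw [← fromCols_mul_fromRows, fromCols_mul_fromRows_eq_one_comm e, fromRows_mul_fromCols,
    hQ, hB, hQB, hBQ, fromBlocks_one]

lemma vnorm_sq_add_vnorm_sq {p k l : ℕ} {Q : Matrix (Fin p) (Fin k) ℝ}
    {B : Matrix (Fin p) (Fin l) ℝ} (h : Q * Qᵀ + B * Bᵀ = 1) (x : Fin p → ℝ) :
    vnorm (Qᵀ *ᵥ x) ^ 2 + vnorm (Bᵀ *ᵥ x) ^ 2 = vnorm x ^ 2 := by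
  rw [vnorm_transpose_mulVec_sq, vnorm_transpose_mulVec_sq, vnorm_sq, ← dotProduct_add,
    ← add_mulVec, h, one_mulVec]

lemma trace_mul_mul_transpose {R n k : Type*} [CommSemiring R] [Fintype n] [Fintype k]
    (P : Matrix n n R) (N : Matrix n k R) :
    (P * (N * Nᵀ)).trace = ∑ i, N.col i ⬝ᵥ P *ᵥ N.col i := by
  rw [← Matrix.mul_assoc, trace_mul_comm]
  simp only [trace, diag, mul_apply, dotProduct, mulVec, col, transpose_apply]

lemma trace_mul_transpose_mul_eq_sum_vnorm_sq {p k l : ℕ} (Q : Matrix (Fin p) (Fin k) ℝ)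
    (N : Matrix (Fin p) (Fin l) ℝ) :
    (Q * Qᵀ * (N * Nᵀ)).trace = ∑ i, vnorm (Qᵀ *ᵥ N.col i) ^ 2 := by
  simp only [trace_mul_mul_transpose, vnorm_transpose_mulVec_sq]

lemma min_div_mul_le_min {a b : ℝ} (ha : 0 ≤ a) (hb : 0 ≤ b) :
    min (a / b) (b / a) * b ≤ min a b := by
  rcases le_total a b with h | h
  · rw [min_eq_left h]
    calc min (a / b) (b / a) * b ≤ a / b * b := by gcongr; exact min_le_left _ _
      _ ≤ a := by rcases eq_or_ne b 0 with hb0 | hb0 <;> simp [hb0, ha]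
  · rw [min_eq_right h]
    calc min (a / b) (b / a) * b ≤ 1 * b := by
          gcongr; exact (min_le_right _ _).trans (div_le_one_of_le₀ h ha)
      _ = b := one_mul _

lemma exists_card_mul_le_sum {ι : Type*} [Fintype ι] [Nonempty ι] (f : ι → ℝ) :
    ∃ i, Fintype.card ι * f i ≤ ∑ j, f j := by
  obtain ⟨i, -, hi⟩ := Finset.exists_min_image Finset.univ f Finset.univ_nonempty
  exact ⟨i, by simpa using Finset.card_nsmul_le_sum _ _ _ hi⟩

lemma exists_col_sq_mul_min_div_le_vnorm_sq {p k1 k2 l : ℕ} (hk1 : 0 < k1) (hk2 : 0 < k2)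
    {Q1 : Matrix (Fin p) (Fin k1) ℝ} {B1 : Matrix (Fin p) (Fin l) ℝ}
    {Q2 : Matrix (Fin p) (Fin k2) ℝ} (hsum : Q1 * Q1ᵀ + B1 * B1ᵀ = 1) (hQ2 : Q2ᵀ * Q2 = 1)
    {d : ℝ} (hd : 0 ≤ d)
    (hD : d ≤ √(1 - (Q1 * Q1ᵀ * (Q2 * Q2ᵀ)).trace / (min k1 k2 : ℕ))) :
    ∃ i, d ^ 2 * min ((k1 : ℝ) / k2) ((k2 : ℝ) / k1) ≤ vnorm (B1ᵀ *ᵥ Q2.col i) ^ 2 := by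
  have : Nonempty (Fin k2) := ⟨⟨0, hk2⟩⟩
  -- `√` of a negative number is `0`, so `hD` carries no information when `d = 0`.
  rcases hd.eq_or_lt with rfl | hd
  · exact ⟨⟨0, hk2⟩, by rw [zero_pow two_ne_zero, zero_mul]; positivity⟩
  set m : ℝ := ((min k1 k2 : ℕ) : ℝ)
  have hm : 0 < m := Nat.cast_pos.2 (lt_min hk1 hk2)
  have hmk2 : m ≤ k2 := Nat.cast_le.2 (min_le_right _ _)
  have htrace : (Q1 * Q1ᵀ * (Q2 * Q2ᵀ)).trace ≤ (1 - d ^ 2) * m :=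
    (div_le_iff₀ hm).1 (by linarith [(Real.le_sqrt' hd).1 hD])
  rw [trace_mul_transpose_mul_eq_sum_vnorm_sq] at htrace
  obtain ⟨i, hi⟩ := exists_card_mul_le_sum fun i => vnorm (Q1ᵀ *ᵥ Q2.col i) ^ 2
  rw [Fintype.card_fin] at hi
  have hpyth : vnorm (Q1ᵀ *ᵥ Q2.col i) ^ 2 + vnorm (B1ᵀ *ᵥ Q2.col i) ^ 2 = 1 := by
    rw [vnorm_sq_add_vnorm_sq hsum, vnorm_col_eq_one hQ2, one_pow]
  have hτ : min ((k1 : ℝ) / k2) ((k2 : ℝ) / k1) * k2 ≤ m := by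
    simpa [m] using min_div_mul_le_min (Nat.cast_nonneg' k1) (Nat.cast_nonneg' k2)
  -- `k2 d² τ ≤ d² m = m - (1 - d²) m ≤ k2 - k2 ‖Q1ᵀ qᵢ‖² = k2 ‖B1ᵀ qᵢ‖²`
  refine ⟨i, le_of_mul_le_mul_left ?_ (Nat.cast_pos.2 hk2 : (0 : ℝ) < k2)⟩
  nlinarith [mul_le_mul_of_nonneg_left hτ (sq_nonneg d)]

theorem stmt5_general {p k1 k2 : ℕ} (hk1 : 0 < k1) (hk2 : 0 < k2) (hk1p : k1 ≤ p)
    (Q1 : Matrix (Fin p) (Fin k1) ℝ) (B1 : Matrix (Fin p) (Fin (p - k1)) ℝ)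
    (Q2 : Matrix (Fin p) (Fin k2) ℝ) (A2 : Matrix (Fin p) (Fin k2) ℝ)
    (hQ1 : Q1ᵀ * Q1 = 1) (hB1 : B1ᵀ * B1 = 1) (hQB : Q1ᵀ * B1 = 0)
    (hQ2 : Q2ᵀ * Q2 = 1)
    (d : ℝ) (hd : 0 ≤ d)
    (hD : d ≤ Real.sqrt (1 - (Q1 * Q1ᵀ * (Q2 * Q2ᵀ)).trace / (min k1 k2 : ℕ)))
    (a2 δ2 : ℝ) (ha2 : 0 < a2)
    (hcol : LinearMap.range A2.mulVecLin = LinearMap.range Q2.mulVecLin)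
    (hA2min : ∀ v : Fin k2 → ℝ, a2 * (p : ℝ) ^ ((1 - δ2) / 2) * vnorm v ≤ vnorm (A2.mulVec v)) :
    a2 ^ 2 * d ^ 2 * min ((k1 : ℝ) / k2) ((k2 : ℝ) / k1) * (p : ℝ) ^ (1 - δ2)
      ≤ spec (B1ᵀ * A2) ^ 2 := by
  have hsum : Q1 * Q1ᵀ + B1 * B1ᵀ = 1 := mul_transpose_add_mul_transpose_eq_one
    ((finCongr (Nat.add_sub_cancel' hk1p).symm).trans finSumFinEquiv.symm) hQ1 hB1 hQB
  obtain ⟨i, hi⟩ := exists_col_sq_mul_min_div_le_vnorm_sq hk1 hk2 hsum hQ2 hd hD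
  obtain ⟨v, hv⟩ : Q2.col i ∈ LinearMap.range A2.mulVecLin :=
    hcol ▸ ⟨Pi.single i 1, mulVec_single_one Q2 i⟩
  rw [mulVecLin_apply] at hv
  set c := a2 * (p : ℝ) ^ ((1 - δ2) / 2)
  have hc2 : c ^ 2 = a2 ^ 2 * (p : ℝ) ^ (1 - δ2) := by
    rw [mul_pow, ← Real.rpow_mul_natCast (Nat.cast_nonneg p)]
    norm_num
  have hc : 0 ≤ c := by positivity
  have hbound := mul_vnorm_mulVec_mulVec_le_spec B1ᵀ A2 hc (hA2min v)
  rw [hv, vnorm_col_eq_one hQ2, mul_one] at hbound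
  calc a2 ^ 2 * d ^ 2 * min ((k1 : ℝ) / k2) ((k2 : ℝ) / k1) * (p : ℝ) ^ (1 - δ2)
      = c ^ 2 * (d ^ 2 * min ((k1 : ℝ) / k2) ((k2 : ℝ) / k1)) := by rw [hc2]; ring
    _ ≤ c ^ 2 * vnorm (B1ᵀ *ᵥ Q2.col i) ^ 2 := by gcongr
    _ = (c * vnorm (B1ᵀ *ᵥ Q2.col i)) ^ 2 := by ring
    _ ≤ spec (B1ᵀ * A2) ^ 2 := by gcongr; exact mul_nonneg hc (vnorm_nonneg _)

/-- If `(Q1, B1)` is a `p × p` orthogonal matrix, `Q2ᵀQ2 = I`,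
`D(Q1,Q2) ≥ d` with `d ≥ 0`, and `A2` has the same column space as `Q2` with
`‖A2 v‖₂ ≥ a2 p^{(1−δ2)/2} ‖v‖₂` for all `v`, then
`‖B1ᵀ A2‖₂² ≥ a2² d² τ p^{1−δ2}` where `τ = min(k1/k2, k2/k1)`. -/
theorem stmt5 {p k1 k2 : ℕ} (hp : 0 < p) (hk1 : 0 < k1) (hk2 : 0 < k2) (hk1p : k1 ≤ p)
    (Q1 : Matrix (Fin p) (Fin k1) ℝ) (B1 : Matrix (Fin p) (Fin (p - k1)) ℝ)
    (Q2 : Matrix (Fin p) (Fin k2) ℝ) (A2 : Matrix (Fin p) (Fin k2) ℝ)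
    (hQ1 : Q1ᵀ * Q1 = 1) (hB1 : B1ᵀ * B1 = 1) (hQB : Q1ᵀ * B1 = 0)
    (hQ2 : Q2ᵀ * Q2 = 1)
    (d : ℝ) (hd : 0 ≤ d)
    (hD : d ≤ Real.sqrt (1 - (Q1 * Q1ᵀ * (Q2 * Q2ᵀ)).trace / (min k1 k2 : ℕ)))
    (a2 δ2 : ℝ) (ha2 : 0 < a2) (hδ2 : δ2 ∈ Set.Icc (0:ℝ) 1)
    (hcol : LinearMap.range A2.mulVecLin = LinearMap.range Q2.mulVecLin)
    (hA2min : ∀ v : Fin k2 → ℝ, a2 * (p : ℝ) ^ ((1 - δ2) / 2) * vnorm v ≤ vnorm (A2.mulVec v)) :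
    a2 ^ 2 * d ^ 2 * min ((k1 : ℝ) / k2) ((k2 : ℝ) / k1) * (p : ℝ) ^ (1 - δ2)
      ≤ spec (B1ᵀ * A2) ^ 2 :=
  stmt5_general hk1 hk2 hk1p Q1 B1 Q2 A2 hQ1 hB1 hQB hQ2 d hd hD a2 δ2 ha2 hcol hA2min
end

section
/- In the change-point factor model with white-noise orthogonality, assume the entrywise moment bound E[(x_{t,i})_j⁴] ≤ σ_x⁴ for all t, i, j, and the loading norm bounds ‖A_i‖₂ ≤ a1 p^{(1−δ_i)/2} (i = 1,2). Let h ≥ 1 be an integer, ε ∈ (−γ0, 1−γ0) with εn an integer and |ε| > (h+1)/n, and k_max = max(k1,k2). Then: if ε < 0, ‖Σ_{y,1}(h, γ0+ε)‖₂ ≤ γ0 a1² k_max σ_x² p^{1−δ1} and ‖Σ_{y,2}(h, γ0+ε)‖₂ ≤ a1² k_max σ_x² ( −ε p^{1−δ1} + (h/n) p^{1−δ1/2−δ2/2} + (1−γ0) p^{1−δ2} ); and if ε > 0, ‖Σ_{y,1}(h, γ0+ε)‖₂ ≤ a1² k_max σ_x² ( γ0 p^{1−δ1} + (h/n) p^{1−δ1/2−δ2/2}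 + ε p^{1−δ2} ) and ‖Σ_{y,2}(h, γ0+ε)‖₂ ≤ (1−γ0) a1² k_max σ_x² p^{1−δ2}. -/
open Matrix MeasureTheory Finset

/-- Entrywise expectation of the outer product `E[u vᵀ]`. -/
noncomputable def outerE {Ω : Type} [MeasurableSpace Ω] (μ : Measure Ω) {a b : ℕ}
    (u : Ω → Fin a → ℝ) (v : Ω → Fin b → ℝ) : Matrix (Fin a) (Fin b) ℝ :=
  Matrix.of fun i j => ∫ ω, u ω i * v ω j ∂μ

/-- `Σ_{y,1}(h,γ) = (1/n)·Σ_{t=1}^{r−h} E[y_t y_{t+h}ᵀ]` where `r = ⌊γn⌋`. -/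
noncomputable def SigY1 {Ω : Type} [MeasurableSpace Ω] (μ : Measure Ω) {p : ℕ}
    (y : ℕ → Ω → Fin p → ℝ) (n h r : ℕ) : Matrix (Fin p) (Fin p) ℝ :=
  (n : ℝ)⁻¹ • ∑ t ∈ Finset.Icc 1 (r - h), outerE μ (y t) (y (t + h))

/-- `Σ_{y,2}(h,γ) = (1/n)·Σ_{t=r+1}^{n−h} E[y_t y_{t+h}ᵀ]` where `r = ⌊γn⌋`. -/
noncomputable def SigY2 {Ω : Type} [MeasurableSpace Ω] (μ : Measure Ω) {p : ℕ}
    (y : ℕ → Ω → Fin p → ℝ) (n h r : ℕ) : Matrix (Fin p) (Fin p) ℝ :=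
  (n : ℝ)⁻¹ • ∑ t ∈ Finset.Icc (r + 1) (n - h), outerE μ (y t) (y (t + h))

/-!
White-noise orthogonality kills the cross terms, so `E[y_t y_{t+h}ᵀ] = A_i E[x x'ᵀ] A_jᵀ` with
`A_i`, `A_j` the loadings in force at times `t` and `t + h`. The fourth-moment bound makes every
entry of `E[x x'ᵀ]` at most `σ_x²`, so its spectral norm is at most `k_max σ_x²` and each summand
has norm at most `‖A_i‖ ‖A_j‖ k_max σ_x²`. Summing over a window, the lags straddling the change
point (`t ≤ r0 < t + h`) number at most `h`; they produce the mixed term `(h/n) p^{1-δ1/2-δ2/2}`.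
-/

open scoped Matrix.Norms.L2Operator

theorem spec_eq_l2_opNorm {m n : ℕ} (A : Matrix (Fin m) (Fin n) ℝ) : spec A = ‖A‖ := rfl

theorem Matrix.l2_opNorm_le_sqrt_sum_sq {a b : Type*} [Fintype a] [Fintype b] [DecidableEq b]
    (M : Matrix a b ℝ) : ‖M‖ ≤ √(∑ i, ∑ j, M i j ^ 2) := by
  rw [l2_opNorm_def]
  refine ContinuousLinearMap.opNorm_le_bound _ (by positivity) fun x => ?_
  simp only [LinearEquiv.trans_apply, LinearMap.coe_toContinuousLinearMap', toLpLin_apply,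
    EuclideanSpace.norm_eq, Real.norm_eq_abs, sq_abs]
  rw [← Real.sqrt_mul (by positivity), Finset.sum_mul]
  refine Real.sqrt_le_sqrt (Finset.sum_le_sum fun i _ => ?_)
  simpa [mulVec, dotProduct] using Finset.sum_mul_sq_le_sq_mul_sq univ (M i) (fun j => x j)

theorem Matrix.l2_opNorm_le_of_abs_le {m n : Type*} [Fintype m] [Fintype n] [DecidableEq n]
    (M : Matrix m n ℝ) {c : ℝ} {k : ℕ} (hc : 0 ≤ c) (hM : ∀ i j, |M i j| ≤ c)
    (hm : Fintype.card m ≤ k) (hn : Fintype.card n ≤ k) : ‖M‖ ≤ k * c := by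
  have hsq : ∀ i j, M i j ^ 2 ≤ c ^ 2 := fun i j => sq_le_sq' (abs_le.1 (hM i j)).1
    (hM i j |>.trans' (le_abs_self _))
  have hmn : (Fintype.card m * Fintype.card n : ℝ) ≤ k ^ 2 := by
    rw [sq]; gcongr
  calc ‖M‖ ≤ √(∑ i, ∑ j, M i j ^ 2) := M.l2_opNorm_le_sqrt_sum_sq
    _ ≤ √(∑ _i : m, ∑ _j : n, c ^ 2) :=
        Real.sqrt_le_sqrt (sum_le_sum fun i _ => sum_le_sum fun j _ => hsq i j)
    _ = √(Fintype.card m * Fintype.card n * c ^ 2) := by simp [mul_assoc]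
    _ ≤ √((k * c) ^ 2) := Real.sqrt_le_sqrt (by rw [mul_pow]; gcongr)
    _ = k * c := Real.sqrt_sq (by positivity)

theorem Matrix.l2_opNorm_transpose {m n : Type*} [Fintype m] [Fintype n] [DecidableEq m]
    [DecidableEq n] (M : Matrix m n ℝ) : ‖Mᵀ‖ = ‖M‖ := by
  rw [← conjTranspose_eq_transpose_of_trivial, l2_opNorm_conjTranspose]

section

variable {Ω : Type} [MeasurableSpace Ω] {μ : Measure Ω} {a b c : ℕ}

theorem abs_integral_mul_le_of_integral_pow_four_le [IsProbabilityMeasure μ] {f g : Ω → ℝ}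
    (hf : MemLp f 4 μ) (hg : MemLp g 4 μ) {σ : ℝ} (hσ : 0 < σ)
    (hf4 : ∫ ω, f ω ^ 4 ∂μ ≤ σ ^ 4) (hg4 : ∫ ω, g ω ^ 4 ∂μ ≤ σ ^ 4) :
    |∫ ω, f ω * g ω ∂μ| ≤ σ ^ 2 := by
  have hint : ∀ {u : Ω → ℝ}, MemLp u 4 μ → Integrable (fun ω => u ω ^ 4) μ := fun hu => by
    simpa [Real.norm_eq_abs, Even.pow_abs ⟨2, rfl⟩] using
      hu.integrable_norm_pow (p := 4) (by norm_num)
  -- AM-GM twice: `|f g| ≤ (f² + g²)/2` and `u² ≤ u⁴/(2σ²) + σ²/2`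
  have hpt : ∀ ω, ‖f ω * g ω‖ ≤ (f ω ^ 4 + g ω ^ 4) / (4 * σ ^ 2) + σ ^ 2 / 2 := fun ω => by
    rw [Real.norm_eq_abs, abs_mul, div_add' _ _ _ (by positivity), le_div_iff₀ (by positivity)]
    nlinarith [sq_nonneg (|f ω| - |g ω|), sq_abs (f ω), sq_abs (g ω), sq_nonneg (f ω ^ 2 - σ ^ 2),
      sq_nonneg (g ω ^ 2 - σ ^ 2)]
  have hfg : Integrable (fun ω => f ω ^ 4 + g ω ^ 4) μ := (hint hf).add (hint hg)
  calc |∫ ω, f ω * g ω ∂μ| ≤ ∫ ω, ((f ω ^ 4 + g ω ^ 4) / (4 * σ ^ 2) + σ ^ 2 / 2) ∂μ :=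
        norm_integral_le_of_norm_le ((hfg.div_const _).add (integrable_const _))
          (ae_of_all _ hpt)
    _ = ((∫ ω, f ω ^ 4 ∂μ) + ∫ ω, g ω ^ 4 ∂μ) / (4 * σ ^ 2) + σ ^ 2 / 2 := by
        rw [integral_add (hfg.div_const _) (integrable_const _), integral_div,
          integral_add (hint hf) (hint hg)]
        simp
    _ ≤ (σ ^ 4 + σ ^ 4) / (4 * σ ^ 2) + σ ^ 2 / 2 := by gcongr
    _ = σ ^ 2 := by field_simp; ring

theorem outerE_transpose (u : Ω → Fin a → ℝ) (w : Ω → Fin b → ℝ) :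
    (outerE μ u w)ᵀ = outerE μ w u := by
  ext i j; simp [outerE, mul_comm]

theorem outerE_add_left {u v : Ω → Fin a → ℝ} {w : Ω → Fin b → ℝ}
    (hu : ∀ i, MemLp (fun ω => u ω i) 2 μ) (hv : ∀ i, MemLp (fun ω => v ω i) 2 μ)
    (hw : ∀ j, MemLp (fun ω => w ω j) 2 μ) :
    outerE μ (u + v) w = outerE μ u w + outerE μ v w := by
  ext i j
  simp only [outerE, of_apply, Matrix.add_apply, Pi.add_apply, add_mul]
  exact integral_add ((hu i).integrable_mul (hw j)) ((hv i).integrable_mul (hw j))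

theorem outerE_add_right {u : Ω → Fin a → ℝ} {v w : Ω → Fin b → ℝ}
    (hu : ∀ i, MemLp (fun ω => u ω i) 2 μ) (hv : ∀ j, MemLp (fun ω => v ω j) 2 μ)
    (hw : ∀ j, MemLp (fun ω => w ω j) 2 μ) :
    outerE μ u (v + w) = outerE μ u v + outerE μ u w := by
  rw [← outerE_transpose, outerE_add_left hv hw hu, transpose_add, outerE_transpose,
    outerE_transpose]

theorem outerE_mulVec_left (A : Matrix (Fin c) (Fin a) ℝ) {u : Ω → Fin a → ℝ}
    {w : Ω → Fin b → ℝ} (hu : ∀ i, MemLp (fun ω => u ω i) 2 μ)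
    (hw : ∀ j, MemLp (fun ω => w ω j) 2 μ) :
    outerE μ (fun ω => A *ᵥ u ω) w = A * outerE μ u w := by
  ext i j
  simp only [outerE, of_apply, mul_apply, mulVec, dotProduct, sum_mul, mul_assoc]
  rw [integral_finsetSum (f := fun k ω => A i k * (u ω k * w ω j)) _
    fun k _ => ((hu k).integrable_mul (hw j)).const_mul _]
  exact sum_congr rfl fun k _ => integral_const_mul _ _

theorem outerE_mulVec_right {u : Ω → Fin a → ℝ} (B : Matrix (Fin c) (Fin b) ℝ)
    {w : Ω → Fin b → ℝ} (hu : ∀ i, MemLp (fun ω => u ω i) 2 μ)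
    (hw : ∀ j, MemLp (fun ω => w ω j) 2 μ) :
    outerE μ u (fun ω => B *ᵥ w ω) = outerE μ u w * Bᵀ := by
  rw [← outerE_transpose, outerE_mulVec_left B hw hu, transpose_mul, outerE_transpose]

theorem memLp_mulVec_apply (A : Matrix (Fin c) (Fin a) ℝ) {u : Ω → Fin a → ℝ}
    (hu : ∀ i, MemLp (fun ω => u ω i) 2 μ) (i : Fin c) :
    MemLp (fun ω => (A *ᵥ u ω) i) 2 μ := by
  simp only [mulVec, dotProduct]
  exact memLp_finsetSum _ fun k _ => (hu k).const_mul _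

theorem outerE_factor_model {ka kb : ℕ} (A : Matrix (Fin a) (Fin ka) ℝ)
    (B : Matrix (Fin b) (Fin kb) ℝ) {x : Ω → Fin ka → ℝ} {z : Ω → Fin kb → ℝ}
    {e₁ : Ω → Fin a → ℝ} {e₂ : Ω → Fin b → ℝ}
    (hx : ∀ j, MemLp (fun ω => x ω j) 2 μ) (hz : ∀ j, MemLp (fun ω => z ω j) 2 μ)
    (he₁ : ∀ i, MemLp (fun ω => e₁ ω i) 2 μ) (he₂ : ∀ i, MemLp (fun ω => e₂ ω i) 2 μ)
    (hxe : outerE μ x e₂ = 0) (hze : outerE μ z e₁ = 0) (hee : outerE μ e₁ e₂ = 0) :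
    outerE μ (fun ω => A *ᵥ x ω + e₁ ω) (fun ω => B *ᵥ z ω + e₂ ω) = A * outerE μ x z * Bᵀ := by
  have hAx := memLp_mulVec_apply A hx
  have hBz := memLp_mulVec_apply B hz
  have hez : outerE μ e₁ z = 0 := by rw [← outerE_transpose, hze, transpose_zero]
  change outerE μ ((fun ω => A *ᵥ x ω) + e₁) ((fun ω => B *ᵥ z ω) + e₂) = _
  rw [outerE_add_left (w := (fun ω => B *ᵥ z ω) + e₂) hAx he₁ fun j => (hBz j).add (he₂ j),
    outerE_add_right hAx hBz he₂, outerE_add_right he₁ hBz he₂, outerE_mulVec_right B hAx hz,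
    outerE_mulVec_left A hx hz, outerE_mulVec_left A hx he₂, outerE_mulVec_right B he₁ hz, hxe,
    hez, hee]
  simp

theorem norm_outerE_le [IsProbabilityMeasure μ] {ka kb k : ℕ} {x : Ω → Fin ka → ℝ}
    {z : Ω → Fin kb → ℝ} (hx : ∀ j, MemLp (fun ω => x ω j) 4 μ)
    (hz : ∀ j, MemLp (fun ω => z ω j) 4 μ) {σ : ℝ} (hσ : 0 < σ)
    (hmx : ∀ j, ∫ ω, x ω j ^ 4 ∂μ ≤ σ ^ 4) (hmz : ∀ j, ∫ ω, z ω j ^ 4 ∂μ ≤ σ ^ 4)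
    (hka : ka ≤ k) (hkb : kb ≤ k) :
    ‖outerE μ x z‖ ≤ k * σ ^ 2 :=
  l2_opNorm_le_of_abs_le _ (by positivity)
    (fun i j => abs_integral_mul_le_of_integral_pow_four_le (hx i) (hz j) hσ (hmx i) (hmz j))
    (by simpa using hka) (by simpa using hkb)

theorem norm_outerE_factor_model_le [IsProbabilityMeasure μ] {ka kb k : ℕ}
    (A : Matrix (Fin a) (Fin ka) ℝ) (B : Matrix (Fin b) (Fin kb) ℝ) {x : Ω → Fin ka → ℝ}
    {z : Ω → Fin kb → ℝ} {e₁ : Ω → Fin a → ℝ} {e₂ : Ω → Fin b → ℝ}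
    (hx : ∀ j, MemLp (fun ω => x ω j) 4 μ) (hz : ∀ j, MemLp (fun ω => z ω j) 4 μ)
    (he₁ : ∀ i, MemLp (fun ω => e₁ ω i) 2 μ) (he₂ : ∀ i, MemLp (fun ω => e₂ ω i) 2 μ)
    (hxe : outerE μ x e₂ = 0) (hze : outerE μ z e₁ = 0) (hee : outerE μ e₁ e₂ = 0)
    {σ : ℝ} (hσ : 0 < σ) (hmx : ∀ j, ∫ ω, x ω j ^ 4 ∂μ ≤ σ ^ 4)
    (hmz : ∀ j, ∫ ω, z ω j ^ 4 ∂μ ≤ σ ^ 4) (hka : ka ≤ k) (hkb : kb ≤ k) :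
    ‖outerE μ (fun ω => A *ᵥ x ω + e₁ ω) (fun ω => B *ᵥ z ω + e₂ ω)‖ ≤
      ‖A‖ * ‖B‖ * (k * σ ^ 2) := by
  rw [outerE_factor_model A B (fun j => (hx j).mono_exponent (by norm_num))
    (fun j => (hz j).mono_exponent (by norm_num)) he₁ he₂ hxe hze hee]
  calc ‖A * outerE μ x z * Bᵀ‖ ≤ ‖A‖ * ‖outerE μ x z‖ * ‖Bᵀ‖ :=
        (l2_opNorm_mul _ _).trans (by gcongr; exact l2_opNorm_mul _ _)
    _ ≤ ‖A‖ * (k * σ ^ 2) * ‖B‖ := by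
        rw [l2_opNorm_transpose]
        gcongr
        exact norm_outerE_le hx hz hσ hmx hmz hka hkb
    _ = ‖A‖ * ‖B‖ * (k * σ ^ 2) := by ring

end

def regime (r0 : ℕ) (c₁ c₂ : ℝ) (s : ℕ) : ℝ := if s ≤ r0 then c₁ else c₂

theorem norm_outerE_lag_le {Ω : Type} [MeasurableSpace Ω] {μ : Measure Ω}
    [IsProbabilityMeasure μ] {p k1 k2 n r0 h t : ℕ}
    {A1 : Matrix (Fin p) (Fin k1) ℝ} {A2 : Matrix (Fin p) (Fin k2) ℝ}
    {x1 : ℕ → Ω → Fin k1 → ℝ} {x2 : ℕ → Ω → Fin k2 → ℝ} {e y : ℕ → Ω → Fin p → ℝ}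
    (hx1 : ∀ t j, MemLp (fun ω => x1 t ω j) 4 μ) (hx2 : ∀ t j, MemLp (fun ω => x2 t ω j) 4 μ)
    (he : ∀ t i, MemLp (fun ω => e t ω i) 2 μ)
    (hy1 : ∀ t, 1 ≤ t → t ≤ r0 → ∀ ω, y t ω = A1 *ᵥ x1 t ω + e t ω)
    (hy2 : ∀ t, r0 < t → t ≤ n → ∀ ω, y t ω = A2 *ᵥ x2 t ω + e t ω)
    (hee : ∀ s t, s ≠ t → outerE μ (e s) (e t) = 0)
    (hx1e : ∀ t s, outerE μ (x1 t) (e s) = 0) (hx2e : ∀ t s, outerE μ (x2 t) (e s) = 0)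
    {σ : ℝ} (hσ : 0 < σ) (hm1 : ∀ t j, ∫ ω, x1 t ω j ^ 4 ∂μ ≤ σ ^ 4)
    (hm2 : ∀ t j, ∫ ω, x2 t ω j ^ 4 ∂μ ≤ σ ^ 4) {c₁ c₂ : ℝ} (hA1 : ‖A1‖ ≤ c₁) (hA2 : ‖A2‖ ≤ c₂)
    (hh : h ≠ 0) (ht : 1 ≤ t) (htn : t + h ≤ n) :
    ‖outerE μ (y t) (y (t + h))‖ ≤
      regime r0 c₁ c₂ t * regime r0 c₁ c₂ (t + h) * ((max k1 k2 : ℕ) * σ ^ 2) := by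
  have hne : t ≠ t + h := by omega
  by_cases h₂ : t + h ≤ r0
  · rw [funext (hy1 t ht (by omega)), funext (hy1 (t + h) (by omega) h₂)]
    simp only [regime, h₂, show t ≤ r0 by omega, if_true]
    refine (norm_outerE_factor_model_le A1 A1 (hx1 t) (hx1 (t + h)) (he t) (he (t + h))
      (hx1e t _) (hx1e _ t) (hee _ _ hne) hσ (hm1 t) (hm1 _) (le_max_left k1 k2)
      (le_max_left k1 k2)).trans ?_
    gcongr
    exact (norm_nonneg _).trans hA1
  by_cases h₁ : t ≤ r0
  · rw [funext (hy1 t ht h₁), funext (hy2 (t + h) (by omega) htn)]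
    simp only [regime, h₁, h₂, if_true, if_false]
    refine (norm_outerE_factor_model_le A1 A2 (hx1 t) (hx2 (t + h)) (he t) (he (t + h))
      (hx1e t _) (hx2e _ t) (hee _ _ hne) hσ (hm1 t) (hm2 _) (le_max_left k1 k2)
      (le_max_right k1 k2)).trans ?_
    gcongr
    exact (norm_nonneg _).trans hA1
  · rw [funext (hy2 t (by omega) (by omega)), funext (hy2 (t + h) (by omega) htn)]
    simp only [regime, h₁, h₂, if_false]
    refine (norm_outerE_factor_model_le A2 A2 (hx2 t) (hx2 (t + h)) (he t) (he (t + h))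
      (hx2e t _) (hx2e _ t) (hee _ _ hne) hσ (hm2 t) (hm2 _) (le_max_right k1 k2)
      (le_max_right k1 k2)).trans ?_
    gcongr
    exact (norm_nonneg _).trans hA2

theorem sum_Icc_regime_mul_regime_le {a b r0 h : ℕ} {c₁ c₂ : ℝ} (hc₁ : 0 ≤ c₁) (hc₂ : 0 ≤ c₂) :
    ∑ t ∈ Icc a b, regime r0 c₁ c₂ t * regime r0 c₁ c₂ (t + h) ≤
      (r0 - h + 1 - a : ℕ) * (c₁ * c₁) + h * (c₁ * c₂) + (b - r0 : ℕ) * (c₂ * c₂) := by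
  set I₁ := Icc a (r0 - h)
  set I₂ := Icc (r0 + 1 - h) r0
  set I₃ := Icc (r0 + 1) b
  have hpt : ∀ t ∈ Icc a b, regime r0 c₁ c₂ t * regime r0 c₁ c₂ (t + h) ≤
      ((if t ∈ I₁ then c₁ * c₁ else 0) + (if t ∈ I₂ then c₁ * c₂ else 0)) +
        (if t ∈ I₃ then c₂ * c₂ else 0) := by
    intro t ht
    rw [mem_Icc] at ht
    simp only [regime, I₁, I₂, I₃, mem_Icc]
    split_ifs <;> first
      | omega
      | linarith [mul_nonneg hc₁ hc₁, mul_nonneg hc₁ hc₂, mul_nonneg hc₂ hc₂]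
  have hsum : ∀ (I : Finset ℕ) (C : ℝ), 0 ≤ C →
      ∑ t ∈ Icc a b, (if t ∈ I then C else 0) ≤ #I * C := fun I C hC => by
    rw [sum_ite_mem, sum_const, nsmul_eq_mul]
    gcongr
    exact inter_subset_right
  calc _ ≤ _ := sum_le_sum hpt
    _ ≤ #I₁ * (c₁ * c₁) + #I₂ * (c₁ * c₂) + #I₃ * (c₂ * c₂) := by
      rw [sum_add_distrib, sum_add_distrib]
      gcongr <;> apply hsum <;> positivity
    _ ≤ _ := by
      simp only [I₁, I₂, I₃, Nat.card_Icc, Nat.add_sub_add_right]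
      gcongr
      exact_mod_cast (by omega : r0 + 1 - (r0 + 1 - h) ≤ h)

theorem norm_inv_natCast_smul_sum_le {E ι : Type*} [SeminormedAddCommGroup E] [NormedSpace ℝ E]
    (n : ℕ) (s : Finset ι) (T : ι → E) {B : ℝ} (hB : ∑ t ∈ s, ‖T t‖ ≤ B) :
    ‖(n : ℝ)⁻¹ • ∑ t ∈ s, T t‖ ≤ B / n := by
  rw [norm_smul, norm_inv, Real.norm_natCast, inv_mul_eq_div]
  gcongr
  exact (norm_sum_le _ _).trans hB

section Windows

variable {Ω : Type} [MeasurableSpace Ω] {μ : Measure Ω} {p : ℕ} {y : ℕ → Ω → Fin p → ℝ}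
  {n h r r0 : ℕ} {c₁ c₂ K : ℝ}

theorem norm_SigY_le_of_le (hc₁ : 0 ≤ c₁) (hc₂ : 0 ≤ c₂) (hK : 0 ≤ K)
    (hT : ∀ t, 1 ≤ t → t + h ≤ n →
      ‖outerE μ (y t) (y (t + h))‖ ≤ regime r0 c₁ c₂ t * regime r0 c₁ c₂ (t + h) * K)
    (hr : r ≤ r0) (hr0n : r0 ≤ n) :
    ‖SigY1 μ y n h r‖ ≤ r0 * (c₁ * c₁) * K / n ∧
      ‖SigY2 μ y n h r‖ ≤
        ((r0 - r) * (c₁ * c₁) + h * (c₁ * c₂) + (n - r0) * (c₂ * c₂)) * K / n := by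
  constructor
  · refine norm_inv_natCast_smul_sum_le _ _ _ ?_
    calc _ ≤ #(Icc 1 (r - h)) • (c₁ * c₁ * K) := sum_le_card_nsmul _ _ _ fun t ht => by
          rw [mem_Icc] at ht
          simpa [regime, show t ≤ r0 by omega, show t + h ≤ r0 by omega]
            using hT t ht.1 (by omega)
      _ ≤ _ := by
          rw [nsmul_eq_mul, Nat.card_Icc, ← mul_assoc]
          gcongr
          exact_mod_cast (by omega : r - h + 1 - 1 ≤ r0)
  · refine norm_inv_natCast_smul_sum_le _ _ _ ?_
    calc _ ≤ (∑ t ∈ Icc (r + 1) (n - h), regime r0 c₁ c₂ t * regime r0 c₁ c₂ (t + h)) * K := by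
          rw [sum_mul]
          exact sum_le_sum fun t ht => by rw [mem_Icc] at ht; exact hT t (by omega) (by omega)
      _ ≤ _ := by
          gcongr
          refine sum_Icc_regime_mul_regime_le hc₁ hc₂ |>.trans ?_
          gcongr
          · rw [le_sub_iff_add_le]; exact_mod_cast (by omega : r0 - h + 1 - (r + 1) + r ≤ r0)
          · rw [le_sub_iff_add_le]; exact_mod_cast (by omega : n - h - r0 + r0 ≤ n)

theorem norm_SigY_le_of_ge (hc₁ : 0 ≤ c₁) (hc₂ : 0 ≤ c₂) (hK : 0 ≤ K)
    (hT : ∀ t, 1 ≤ t → t + h ≤ n →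
      ‖outerE μ (y t) (y (t + h))‖ ≤ regime r0 c₁ c₂ t * regime r0 c₁ c₂ (t + h) * K)
    (hr : r0 ≤ r) (hrn : r ≤ n) :
    ‖SigY1 μ y n h r‖ ≤
        (r0 * (c₁ * c₁) + h * (c₁ * c₂) + (r - r0) * (c₂ * c₂)) * K / n ∧
      ‖SigY2 μ y n h r‖ ≤ (n - r0) * (c₂ * c₂) * K / n := by
  constructor
  · refine norm_inv_natCast_smul_sum_le _ _ _ ?_
    calc _ ≤ (∑ t ∈ Icc 1 (r - h), regime r0 c₁ c₂ t * regime r0 c₁ c₂ (t + h)) * K := by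
          rw [sum_mul]
          exact sum_le_sum fun t ht => by rw [mem_Icc] at ht; exact hT t (by omega) (by omega)
      _ ≤ _ := by
          gcongr
          refine sum_Icc_regime_mul_regime_le hc₁ hc₂ |>.trans ?_
          gcongr
          · exact_mod_cast (by omega : r0 - h + 1 - 1 ≤ r0)
          · rw [le_sub_iff_add_le]; exact_mod_cast (by omega : r - h - r0 + r0 ≤ r)
  · refine norm_inv_natCast_smul_sum_le _ _ _ ?_
    calc _ ≤ #(Icc (r + 1) (n - h)) • (c₂ * c₂ * K) := sum_le_card_nsmul _ _ _ fun t ht => by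
          rw [mem_Icc] at ht
          simpa [regime, show ¬ t ≤ r0 by omega, show ¬ t + h ≤ r0 by omega]
            using hT t (by omega) (by omega)
      _ ≤ _ := by
          rw [nsmul_eq_mul, Nat.card_Icc, ← mul_assoc]
          gcongr
          rw [le_sub_iff_add_le]
          exact_mod_cast (by omega : n - h + 1 - (r + 1) + r0 ≤ n)

end Windows

theorem mul_rpow_mul_mul_rpow {x : ℝ} (hx : 0 < x) (a u v : ℝ) :
    a * x ^ u * (a * x ^ v) = a ^ 2 * x ^ (u + v) := by
  rw [Real.rpow_add hx]; ring

theorem natCast_floor_eq_of_mul_eq_intCast {n r0 : ℕ} {ε : ℝ} (hn : 0 < n) {m : ℤ}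
    (hm : ε * n = m) (hε : -((r0 : ℝ) / n) < ε) :
    (⌊((r0 : ℝ) / n + ε) * n⌋₊ : ℝ) = r0 + ε * n := by
  have hn0 : (0 : ℝ) < n := by exact_mod_cast hn
  have hx : ((r0 : ℝ) / n + ε) * n = ((r0 + m : ℤ) : ℝ) := by
    push_cast; rw [← hm]; field_simp
  rw [natCast_floor_eq_intCast_floor (mul_pos (by linarith) hn0).le, hx, Int.floor_intCast]
  push_cast; rw [hm]

theorem stmt10_general {Ω : Type} [MeasurableSpace Ω] (μ : Measure Ω) [IsProbabilityMeasure μ]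
    {p k1 k2 n r0 : ℕ} (hp : 0 < p) (hn : 0 < n) (hr0n : r0 ≤ n)
    (A1 : Matrix (Fin p) (Fin k1) ℝ) (A2 : Matrix (Fin p) (Fin k2) ℝ)
    (x1 : ℕ → Ω → Fin k1 → ℝ) (x2 : ℕ → Ω → Fin k2 → ℝ)
    (e : ℕ → Ω → Fin p → ℝ) (y : ℕ → Ω → Fin p → ℝ)
    (hL4x1 : ∀ t j, MemLp (fun ω => x1 t ω j) 4 μ)
    (hL4x2 : ∀ t j, MemLp (fun ω => x2 t ω j) 4 μ)
    (hL2e : ∀ t i, MemLp (fun ω => e t ω i) 2 μ)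
    (hmodel1 : ∀ t, 1 ≤ t → t ≤ r0 → ∀ ω, y t ω = A1.mulVec (x1 t ω) + e t ω)
    (hmodel2 : ∀ t, r0 < t → t ≤ n → ∀ ω, y t ω = A2.mulVec (x2 t ω) + e t ω)
    (hee : ∀ s t, s ≠ t → outerE μ (e s) (e t) = 0)
    (hx1e : ∀ t s, outerE μ (x1 t) (e s) = 0)
    (hx2e : ∀ t s, outerE μ (x2 t) (e s) = 0)
    (σx : ℝ) (hσx : 0 < σx)
    (hmom1 : ∀ t j, ∫ ω, (x1 t ω j) ^ 4 ∂μ ≤ σx ^ 4)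
    (hmom2 : ∀ t j, ∫ ω, (x2 t ω j) ^ 4 ∂μ ≤ σx ^ 4)
    (a1 δ1 δ2 : ℝ)
    (hA1 : spec A1 ≤ a1 * (p : ℝ) ^ ((1 - δ1) / 2))
    (hA2 : spec A2 ≤ a1 * (p : ℝ) ^ ((1 - δ2) / 2))
    (h : ℕ) (hh : 1 ≤ h) (ε : ℝ)
    (hεlb : -((r0 : ℝ) / n) < ε) (hεub : ε < 1 - (r0 : ℝ) / n)
    (hεint : ∃ m : ℤ, ε * n = m) :
    (ε < 0 →
      spec (SigY1 μ y n h ⌊((r0 : ℝ) / n + ε) * n⌋₊) ≤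
        ((r0 : ℝ) / n) * a1 ^ 2 * (max k1 k2 : ℕ) * σx ^ 2 * (p : ℝ) ^ (1 - δ1) ∧
      spec (SigY2 μ y n h ⌊((r0 : ℝ) / n + ε) * n⌋₊) ≤
        a1 ^ 2 * (max k1 k2 : ℕ) * σx ^ 2 *
          (-ε * (p : ℝ) ^ (1 - δ1) + ((h : ℝ) / n) * (p : ℝ) ^ (1 - δ1 / 2 - δ2 / 2) +
            (1 - (r0 : ℝ) / n) * (p : ℝ) ^ (1 - δ2))) ∧
    (0 < ε →
      spec (SigY1 μ y n h ⌊((r0 : ℝ) / n + ε) * n⌋₊) ≤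
        a1 ^ 2 * (max k1 k2 : ℕ) * σx ^ 2 *
          (((r0 : ℝ) / n) * (p : ℝ) ^ (1 - δ1) + ((h : ℝ) / n) * (p : ℝ) ^ (1 - δ1 / 2 - δ2 / 2) +
            ε * (p : ℝ) ^ (1 - δ2)) ∧
      spec (SigY2 μ y n h ⌊((r0 : ℝ) / n + ε) * n⌋₊) ≤
        (1 - (r0 : ℝ) / n) * a1 ^ 2 * (max k1 k2 : ℕ) * σx ^ 2 * (p : ℝ) ^ (1 - δ2)) := by
  obtain ⟨m, hm⟩ := hεint
  have hn0 : (0 : ℝ) < n := by exact_mod_cast hn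
  have hp0 : (0 : ℝ) < p := by exact_mod_cast hp
  have hT := fun t => norm_outerE_lag_le (h := h) (t := t) hL4x1 hL4x2 hL2e hmodel1 hmodel2 hee
    hx1e hx2e hσx hmom1 hmom2 hA1 hA2 (by omega)
  have hc₁ := (norm_nonneg _).trans hA1
  have hc₂ := (norm_nonneg _).trans hA2
  have hK : 0 ≤ ((max k1 k2 : ℕ) : ℝ) * σx ^ 2 := by positivity
  set r := ⌊((r0 : ℝ) / n + ε) * n⌋₊
  have hr : (r : ℝ) = r0 + ε * n := natCast_floor_eq_of_mul_eq_intCast hn hm hεlb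
  have hεn : ε * n < n - r0 := by
    have := mul_lt_mul_of_pos_right hεub hn0
    rwa [sub_mul, div_mul_cancel₀ _ hn0.ne', one_mul] at this
  simp only [spec_eq_l2_opNorm]
  refine ⟨fun hε => ?_, fun hε => ?_⟩
  · obtain ⟨hY1, hY2⟩ := norm_SigY_le_of_le hc₁ hc₂ hK hT
      (by exact_mod_cast (show (r : ℝ) ≤ r0 by nlinarith)) hr0n
    simp only [mul_rpow_mul_mul_rpow hp0, hr] at hY1 hY2
    exact ⟨hY1.trans_eq (by field_simp; ring_nf), hY2.trans_eq (by field_simp; ring_nf)⟩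
  · obtain ⟨hY1, hY2⟩ := norm_SigY_le_of_ge hc₁ hc₂ hK hT
      (by exact_mod_cast (show (r0 : ℝ) ≤ r by nlinarith))
      (by exact_mod_cast (show (r : ℝ) ≤ n by linarith))
    simp only [mul_rpow_mul_mul_rpow hp0, hr] at hY1 hY2
    exact ⟨hY1.trans_eq (by field_simp; ring_nf), hY2.trans_eq (by field_simp; ring_nf)⟩

/-- In the change-point factor model with white-noise orthogonality,
4th-moment bounds and loading norm bounds: for integer `h ≥ 1` and
`ε ∈ (−γ0, 1−γ0)` with `εn ∈ ℤ` and `|ε| > (h+1)/n`, the spectral norms of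
`Σ_{y,1}(h,γ0+ε)` and `Σ_{y,2}(h,γ0+ε)` satisfy the stated bounds, for `ε < 0`
and for `ε > 0` respectively. -/
theorem stmt10 {Ω : Type} [MeasurableSpace Ω] (μ : Measure Ω) [IsProbabilityMeasure μ]
    {p k1 k2 n r0 : ℕ} (hp : 0 < p) (hn : 0 < n) (hr0 : 1 ≤ r0) (hr0n : r0 ≤ n)
    (A1 : Matrix (Fin p) (Fin k1) ℝ) (A2 : Matrix (Fin p) (Fin k2) ℝ)
    (x1 : ℕ → Ω → Fin k1 → ℝ) (x2 : ℕ → Ω → Fin k2 → ℝ)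
    (e : ℕ → Ω → Fin p → ℝ) (y : ℕ → Ω → Fin p → ℝ)
    (hL4x1 : ∀ t j, MemLp (fun ω => x1 t ω j) 4 μ)
    (hL4x2 : ∀ t j, MemLp (fun ω => x2 t ω j) 4 μ)
    (hL2e : ∀ t i, MemLp (fun ω => e t ω i) 2 μ)
    (hmodel1 : ∀ t, 1 ≤ t → t ≤ r0 → ∀ ω, y t ω = A1.mulVec (x1 t ω) + e t ω)
    (hmodel2 : ∀ t, r0 < t → t ≤ n → ∀ ω, y t ω = A2.mulVec (x2 t ω) + e t ω)
    (hee : ∀ s t, s ≠ t → outerE μ (e s) (e t) = 0)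
    (hx1e : ∀ t s, outerE μ (x1 t) (e s) = 0)
    (hx2e : ∀ t s, outerE μ (x2 t) (e s) = 0)
    (σx : ℝ) (hσx : 0 < σx)
    (hmom1 : ∀ t j, ∫ ω, (x1 t ω j) ^ 4 ∂μ ≤ σx ^ 4)
    (hmom2 : ∀ t j, ∫ ω, (x2 t ω j) ^ 4 ∂μ ≤ σx ^ 4)
    (a1 δ1 δ2 : ℝ) (ha1 : 0 < a1) (hδ1 : δ1 ∈ Set.Icc (0:ℝ) 1) (hδ2 : δ2 ∈ Set.Icc (0:ℝ) 1)
    (hA1 : spec A1 ≤ a1 * (p : ℝ) ^ ((1 - δ1) / 2))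
    (hA2 : spec A2 ≤ a1 * (p : ℝ) ^ ((1 - δ2) / 2))
    (h : ℕ) (hh : 1 ≤ h) (ε : ℝ)
    (hεlb : -((r0 : ℝ) / n) < ε) (hεub : ε < 1 - (r0 : ℝ) / n)
    (hεint : ∃ m : ℤ, ε * n = m) (hεabs : ((h : ℝ) + 1) / n < |ε|) :
    (ε < 0 →
      spec (SigY1 μ y n h ⌊((r0 : ℝ) / n + ε) * n⌋₊) ≤
        ((r0 : ℝ) / n) * a1 ^ 2 * (max k1 k2 : ℕ) * σx ^ 2 * (p : ℝ) ^ (1 - δ1) ∧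
      spec (SigY2 μ y n h ⌊((r0 : ℝ) / n + ε) * n⌋₊) ≤
        a1 ^ 2 * (max k1 k2 : ℕ) * σx ^ 2 *
          (-ε * (p : ℝ) ^ (1 - δ1) + ((h : ℝ) / n) * (p : ℝ) ^ (1 - δ1 / 2 - δ2 / 2) +
            (1 - (r0 : ℝ) / n) * (p : ℝ) ^ (1 - δ2))) ∧
    (0 < ε →
      spec (SigY1 μ y n h ⌊((r0 : ℝ) / n + ε) * n⌋₊) ≤
        a1 ^ 2 * (max k1 k2 : ℕ) * σx ^ 2 *
          (((r0 : ℝ) / n) * (p : ℝ) ^ (1 - δ1) + ((h : ℝ) / n) * (p : ℝ) ^ (1 - δ1 / 2 - δ2 / 2) +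
            ε * (p : ℝ) ^ (1 - δ2)) ∧
      spec (SigY2 μ y n h ⌊((r0 : ℝ) / n + ε) * n⌋₊) ≤
        (1 - (r0 : ℝ) / n) * a1 ^ 2 * (max k1 k2 : ℕ) * σx ^ 2 * (p : ℝ) ^ (1 - δ2)) :=
  stmt10_general μ hp hn hr0n A1 A2 x1 x2 e y hL4x1 hL4x2 hL2e hmodel1 hmodel2 hee hx1e hx2e σx hσx
    hmom1 hmom2 a1 δ1 δ2 hA1 hA2 h hh ε hεlb hεub hεint
end
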